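/- Let n ≥ 2 and k ≥ 1 be natural numbers with k ≤ n, and for 0 ≤ t ≤ n-1 define p_t = Σ_{i=1}^{min(k,n-t)} C(k,i)·C(t+1,i)·C(n-t,i)/C(n,i)² (a positive real). Then Σ_{t=0}^{n-1} 1/p_t ≤ (2n²/(k(n+1)))·H_n ≤ (2n/k)·(Real.log n + 1), where H_n = Σ_{i=1}^{n} 1/i is the n-th harmonic number and C denotes the binomial coefficient. -/

import Mathlib

/-!
Keeping only the `i = 1` term gives `p_t ≥ k (t + 1) (n - t) / n²`. The partial fractions
`1 / ((t + 1) (n - t)) = (1 / (t + 1) + 1 / (n - t)) / (n + 1)` and the reflection `t ↦ n - 1 - t`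
turn `∑ 1 / ((t + 1) (n - t))` into `2 H_n / (n + 1)`, and `H_n ≤ log n + 1`.
-/

open Finset

/-- The paper's `p_t`: the probability that a step marks a new card when `t` cards are marked. -/
noncomputable def kRTSMarkProb (n k t : ℕ) : ℝ :=
  ∑ i ∈ Finset.Icc 1 (min k (n - t)),
    ((k.choose i : ℝ) * ((t + 1).choose i : ℝ) * ((n - t).choose i : ℝ)) / ((n.choose i : ℝ)) ^ 2

lemma mul_mul_div_sq_le_kRTSMarkProb {n k t : ℕ} (hk : 1 ≤ k) (ht : t < n) :
    (k : ℝ) * ((t + 1) * (n - t)) / (n : ℝ) ^ 2 ≤ kRTSMarkProb n k t := by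
  have hone : 1 ∈ Icc 1 (min k (n - t)) := mem_Icc.2 ⟨le_rfl, le_min hk (Nat.sub_pos_of_lt ht)⟩
  calc (k : ℝ) * ((t + 1) * (n - t)) / (n : ℝ) ^ 2
      = (k.choose 1 : ℝ) * ((t + 1).choose 1 : ℝ) * ((n - t).choose 1 : ℝ) / (n.choose 1 : ℝ) ^ 2 := by
        simp [Nat.cast_sub ht.le, mul_assoc]
    _ ≤ kRTSMarkProb n k t :=
        single_le_sum (f := fun i ↦ (k.choose i : ℝ) * ((t + 1).choose i : ℝ) *
          ((n - t).choose i : ℝ) / (n.choose i : ℝ) ^ 2) (fun i _ ↦ by positivity) hone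

lemma one_div_kRTSMarkProb_le {n k t : ℕ} (hk : 1 ≤ k) (ht : t < n) :
    1 / kRTSMarkProb n k t ≤ (n : ℝ) ^ 2 / k * (1 / ((t + 1) * (n - t))) := by
  have hnt : (0 : ℝ) < n - t := sub_pos.2 (by exact_mod_cast ht)
  have hpos : (0 : ℝ) < k * ((t + 1) * (n - t)) / (n : ℝ) ^ 2 := by
    have : (0 : ℝ) < n := by exact_mod_cast (t.zero_le.trans_lt ht)
    have : (0 : ℝ) < k := by exact_mod_cast hk
    positivity
  calc 1 / kRTSMarkProb n k t ≤ 1 / (k * ((t + 1) * (n - t)) / (n : ℝ) ^ 2) :=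
        one_div_le_one_div_of_le hpos (mul_mul_div_sq_le_kRTSMarkProb hk ht)
    _ = (n : ℝ) ^ 2 / k * (1 / ((t + 1) * (n - t))) := by field_simp

lemma sum_range_one_div_sub_eq (n : ℕ) :
    ∑ t ∈ range n, 1 / ((n : ℝ) - t) = ∑ i ∈ range n, 1 / ((i : ℝ) + 1) := by
  rw [← sum_range_reflect]
  refine sum_congr rfl fun t ht ↦ ?_
  have ht : t + 1 ≤ n := mem_range.1 ht
  rw [show n - 1 - t = n - (t + 1) by omega, Nat.cast_sub ht]
  push_cast
  ring

lemma sum_range_one_div_succ_mul_sub (n : ℕ) :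
    ∑ t ∈ range n, 1 / (((t : ℝ) + 1) * (n - t)) = 2 / (n + 1) * ∑ i ∈ range n, 1 / ((i : ℝ) + 1) := by
  have hsplit : ∀ t ∈ range n,
      1 / (((t : ℝ) + 1) * (n - t)) = 1 / (n + 1) * (1 / ((t : ℝ) + 1) + 1 / ((n : ℝ) - t)) := by
    intro t ht
    have : (0 : ℝ) < n - t := sub_pos.2 (by exact_mod_cast mem_range.1 ht)
    field_simp
    ring
  rw [sum_congr rfl hsplit, ← mul_sum, sum_add_distrib, sum_range_one_div_sub_eq]
  ring

lemma sum_range_one_div_succ_le_log_add_one (n : ℕ) :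
    ∑ i ∈ range n, 1 / ((i : ℝ) + 1) ≤ Real.log n + 1 := by
  have h : ∑ i ∈ range n, 1 / ((i : ℝ) + 1) = (harmonic n : ℝ) := by
    simp [harmonic]
  rw [h, add_comm]
  exact_mod_cast harmonic_le_one_add_log n

theorem kRTS_mixing_time_bound_general
    (n k : ℕ) (hk : 1 ≤ k)
    (p : ℕ → ℝ)
    (hp : ∀ t, p t = ∑ i ∈ Finset.Icc 1 (min k (n - t)),
        ((k.choose i : ℝ) * ((t + 1).choose i : ℝ) * ((n - t).choose i : ℝ))
          / ((n.choose i : ℝ)) ^ 2) :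
    (∑ t ∈ Finset.range n, 1 / p t
        ≤ (2 * (n : ℝ) ^ 2 / ((k : ℝ) * ((n : ℝ) + 1)))
            * ∑ i ∈ Finset.range n, (1 : ℝ) / ((i : ℝ) + 1))
    ∧ (2 * (n : ℝ) ^ 2 / ((k : ℝ) * ((n : ℝ) + 1)))
          * ∑ i ∈ Finset.range n, (1 : ℝ) / ((i : ℝ) + 1)
        ≤ (2 * (n : ℝ) / (k : ℝ)) * (Real.log n + 1) := by
  obtain rfl : p = kRTSMarkProb n k := funext hp
  have hH : 0 ≤ ∑ i ∈ range n, (1 : ℝ) / ((i : ℝ) + 1) := sum_nonneg fun i _ ↦ by positivity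
  constructor
  · calc ∑ t ∈ range n, 1 / kRTSMarkProb n k t
        ≤ ∑ t ∈ range n, (n : ℝ) ^ 2 / k * (1 / ((t + 1) * (n - t))) :=
          sum_le_sum fun t ht ↦ one_div_kRTSMarkProb_le hk (mem_range.1 ht)
      _ = _ := by
          rw [← mul_sum, sum_range_one_div_succ_mul_sub]
          field_simp
  · have hcoef : 2 * (n : ℝ) ^ 2 / (k * (n + 1)) ≤ 2 * n / k := by
      rw [mul_comm (k : ℝ), ← div_div, div_le_div_iff_of_pos_right (by exact_mod_cast hk),
        div_le_iff₀ (by positivity)]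
      nlinarith [n.cast_nonneg (α := ℝ)]
    exact mul_le_mul hcoef (sum_range_one_div_succ_le_log_add_one n) hH (by positivity)

/-- Mixing time of the k-random-transposition shuffle: with
`p_t = ∑_{i=1}^{min(k,n-t)} C(k,i) C(t+1,i) C(n-t,i) / C(n,i)²`, the expected
stopping time `∑_{t=0}^{n-1} 1/p_t` is at most `(2n²/(k(n+1))) · H_n`, which is
itself at most `(2n/k)(log n + 1)`. -/
theorem kRTS_mixing_time_bound
    (n k : ℕ) (hn : 2 ≤ n) (hk : 1 ≤ k) (hkn : k ≤ n)
    (p : ℕ → ℝ)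
    (hp : ∀ t, p t = ∑ i ∈ Finset.Icc 1 (min k (n - t)),
        ((k.choose i : ℝ) * ((t + 1).choose i : ℝ) * ((n - t).choose i : ℝ))
          / ((n.choose i : ℝ)) ^ 2) :
    (∑ t ∈ Finset.range n, 1 / p t
        ≤ (2 * (n : ℝ) ^ 2 / ((k : ℝ) * ((n : ℝ) + 1)))
            * ∑ i ∈ Finset.range n, (1 : ℝ) / ((i : ℝ) + 1))
    ∧ (2 * (n : ℝ) ^ 2 / ((k : ℝ) * ((n : ℝ) + 1)))
          * ∑ i ∈ Finset.range n, (1 : ℝ) / ((i : ℝ) + 1)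
        ≤ (2 * (n : ℝ) / (k : ℝ)) * (Real.log n + 1) :=
  kRTS_mixing_time_bound_general n k hk p hp
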